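/- arXiv:2605.12238 — 3 statements merged into one kernel-verified Lean document; each statement's English description precedes it below -/
import Mathlib

section
/- Fix r > 1, a parameter a₀ ∈ ℝ, and an integer n ≥ 3 such that w_j(a₀) = f_{a₀}^j(0) ≠ 0 for 1 ≤ j ≤ n−1 and f_{a₀}^n(0) = 0, and let ω = (w_1(a₀), …, w_{n−1}(a₀)). Then the Thurston map T is differentiable at ω, and its Jacobian matrix D_ωT(ω) has entries: for 1 ≤ j ≤ n−2, the (j,1) entry is −1/f_{a₀}'(w_j(a₀)) and the (j, j+1) entry is 1/f_{a₀}'(w_j(a₀)); the (n−1, 1) entry is −1/f_{a₀}'(w_{n−1}(a₀)); and all other entries are 0. Here f_{a₀}'(x) = −r·sgn(x)·|x|^{r−1}. -/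
/-- The power-law unimodal map `f_a(x) = a - |x|^r` (with `|x|^r` a real power). -/
noncomputable def powerLawMap (a r : ℝ) : ℝ → ℝ := fun x => a - |x| ^ r

/-- The critical orbit `w_j(a) = f_a^j(0)`. -/
noncomputable def criticalOrbit (a r : ℝ) (j : ℕ) : ℝ := (powerLawMap a r)^[j] 0

/-- The derivative `f_a'(x) = -r · sgn(x) · |x|^{r-1}`. -/
noncomputable def powerLawDeriv (r : ℝ) (x : ℝ) : ℝ := -r * Real.sign x * |x| ^ (r - 1)

/-- The Thurston map `T : ℝ^m → ℝ^m` (with `m = n - 1`) associated with signs `σ`: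
`T(z)_j = σ_{j+1} (z₁ - z_{j+2})^{1/r}` for the first `m - 1` coordinates (0-based row `j`
corresponds to the mathematical index `j+1`), and `T(z)_m = σ_m z₁^{1/r}` for the last
coordinate. -/
noncomputable def thurstonMap (r : ℝ) (m : ℕ) (σ : ℕ → ℝ) (z : Fin m → ℝ) : Fin m → ℝ :=
  fun j =>
    if h : (j : ℕ) + 1 < m then
      σ ((j : ℕ) + 1) *
        (z ⟨0, Nat.lt_of_le_of_lt (Nat.zero_le _) j.isLt⟩ - z ⟨(j : ℕ) + 1, h⟩) ^ (1 / r)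
    else
      σ m * (z ⟨0, Nat.lt_of_le_of_lt (Nat.zero_le _) j.isLt⟩) ^ (1 / r)

/-- The Jacobian matrix of the Thurston map at the fixed point `ω`: in 1-based mathematical
indexing, for `1 ≤ j ≤ n-2` the `(j,1)` entry is `-1/f'(w_j)` and the `(j,j+1)` entry is
`1/f'(w_j)`; the `(n-1,1)` entry is `-1/f'(w_{n-1})`; all other entries vanish.  Here row
`j : Fin m` (0-based) corresponds to the mathematical index `j+1`, and `m = n-1`. -/
noncomputable def thurstonJacobian (a₀ r : ℝ) (m : ℕ) :
    Matrix (Fin m) (Fin m) ℝ :=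
  fun j i =>
    if (j : ℕ) + 1 < m then
      if (i : ℕ) = 0 then -1 / powerLawDeriv r (criticalOrbit a₀ r ((j : ℕ) + 1))
      else if (i : ℕ) = (j : ℕ) + 1 then 1 / powerLawDeriv r (criticalOrbit a₀ r ((j : ℕ) + 1))
      else 0
    else
      if (i : ℕ) = 0 then -1 / powerLawDeriv r (criticalOrbit a₀ r m) else 0

/-!
Each coordinate of `T` is `σ_j · ℓ_j(z)^{1/r}` for a coordinate form `ℓ_j` (`z₁ - z_{j+1}`, or
`z₁` on the last row). From `w_1 = a₀`, `w_{j+1} = a₀ - |w_j|^r` and `w_n = 0` one gets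
`ℓ_j(ω) = |w_j|^r`, and near that value `u ↦ σ_j u^{1/r}` is the branch of the inverse of
`x ↦ |x|^r = a₀ - f_{a₀}(x)` through `w_j`. The chain rule gives row `j` of the Jacobian as
`-ℓ_j / f_{a₀}'(w_j)`.
-/

open Real

lemma criticalOrbit_succ (a r : ℝ) (k : ℕ) :
    criticalOrbit a r (k + 1) = a - |criticalOrbit a r k| ^ r := by
  simp only [criticalOrbit, Function.iterate_succ_apply', powerLawMap]

lemma criticalOrbit_one {a r : ℝ} (hr : r ≠ 0) : criticalOrbit a r 1 = a := by
  simp [criticalOrbit, powerLawMap, zero_rpow hr]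

lemma criticalOrbit_one_sub_succ {a r : ℝ} (hr : r ≠ 0) (k : ℕ) :
    criticalOrbit a r 1 - criticalOrbit a r (k + 1) = |criticalOrbit a r k| ^ r := by
  rw [criticalOrbit_one hr, criticalOrbit_succ]
  ring

lemma hasDerivAt_sign_mul_rpow_one_div {r w : ℝ} (hr : r ≠ 0) (hw : w ≠ 0) :
    HasDerivAt (fun u => Real.sign w * u ^ (1 / r)) (-1 / powerLawDeriv r w) (|w| ^ r) := by
  have hpos : 0 < |w| := abs_pos.mpr hw
  have hpow : (|w| ^ r) ^ (1 / r - 1) = (|w| ^ (r - 1))⁻¹ := by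
    rw [← rpow_mul hpos.le, ← rpow_neg hpos.le]
    congr 1
    field_simp
    ring
  refine ((hasDerivAt_rpow_const (Or.inl (rpow_pos_of_pos hpos r).ne')).const_mul
    (Real.sign w)).congr_deriv ?_
  rw [hpow, powerLawDeriv]
  have := (rpow_pos_of_pos hpos (r - 1)).ne'
  rcases sign_apply_eq_of_ne_zero w hw with hs | hs <;> rw [hs] <;> field_simp

lemma hasFDerivAt_sign_mul_clm_rpow_one_div {E : Type*} [NormedAddCommGroup E]
    [NormedSpace ℝ E] {r w : ℝ} (hr : r ≠ 0) (hw : w ≠ 0) (ℓ : E →L[ℝ] ℝ) {x : E}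
    (hx : ℓ x = |w| ^ r) :
    HasFDerivAt (fun z => Real.sign w * ℓ z ^ (1 / r)) ((-1 / powerLawDeriv r w) • ℓ) x :=
  (hx ▸ hasDerivAt_sign_mul_rpow_one_div hr hw).comp_hasFDerivAt x ℓ.hasFDerivAt

noncomputable def thurstonForm {m : ℕ} (j : Fin m) : (Fin m → ℝ) →L[ℝ] ℝ :=
  if h : (j : ℕ) + 1 < m then .proj ⟨0, j.pos⟩ - .proj ⟨(j : ℕ) + 1, h⟩ else .proj ⟨0, j.pos⟩

lemma thurstonMap_apply (r : ℝ) {m : ℕ} (σ : ℕ → ℝ) (z : Fin m → ℝ) (j : Fin m) :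
    thurstonMap r m σ z j = σ (j + 1) * thurstonForm j z ^ (1 / r) := by
  unfold thurstonMap thurstonForm
  split_ifs with h
  · rfl
  · rw [show (j : ℕ) + 1 = m by omega]
    rfl

lemma thurstonJacobian_mulVec_apply (a r : ℝ) {m : ℕ} (z : Fin m → ℝ) (j : Fin m) :
    (thurstonJacobian a r m).mulVec z j
      = -1 / powerLawDeriv r (criticalOrbit a r (j + 1)) * thurstonForm j z := by
  simp only [Matrix.mulVec, dotProduct, thurstonJacobian, thurstonForm]
  by_cases h : (j : ℕ) + 1 < m
  · rw [Fintype.sum_eq_add ⟨0, j.pos⟩ ⟨(j : ℕ) + 1, h⟩ (by simp [Fin.ext_iff])]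
    · simp only [h, if_true, dif_pos, Nat.succ_ne_zero, if_false, sub_apply,
        ContinuousLinearMap.proj_apply]
      ring
    · rintro i ⟨h0, h1⟩
      simp [h, Fin.val_ne_of_ne h0, Fin.val_ne_of_ne h1]
  · obtain hj : (j : ℕ) + 1 = m := by omega
    rw [Fintype.sum_eq_single ⟨0, j.pos⟩]
    · simp [hj]
    · intro i h0
      simp [h, Fin.val_ne_of_ne h0]

lemma thurstonForm_criticalOrbit {a r : ℝ} (hr : r ≠ 0) {m : ℕ}
    (hper : criticalOrbit a r (m + 1) = 0) (j : Fin m) :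
    thurstonForm j (fun i => criticalOrbit a r (i + 1)) = |criticalOrbit a r (j + 1)| ^ r := by
  unfold thurstonForm
  split_ifs with h
  · exact criticalOrbit_one_sub_succ hr _
  · rw [show (j : ℕ) + 1 = m by omega, ← criticalOrbit_one_sub_succ hr, hper, sub_zero]
    rfl

theorem thurston_hasFDerivAt_general (r a₀ : ℝ) (hr : 1 < r) (n : ℕ)
    (horbit : ∀ j, 1 ≤ j → j ≤ n - 1 → criticalOrbit a₀ r j ≠ 0)
    (hper : criticalOrbit a₀ r n = 0) :
    HasFDerivAt (thurstonMap r (n - 1) (fun j => Real.sign (criticalOrbit a₀ r j)))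
      (LinearMap.toContinuousLinearMap
        (Matrix.mulVecLin (thurstonJacobian a₀ r (n - 1))))
      (fun i : Fin (n - 1) => criticalOrbit a₀ r ((i : ℕ) + 1)) := by
  have hr0 : r ≠ 0 := (zero_lt_one.trans hr).ne'
  rw [hasFDerivAt_pi']
  intro j
  have hn : n - 1 + 1 = n := by have := j.pos; omega
  have hw := horbit (j + 1) (by omega) (by omega)
  simp only [thurstonMap_apply]
  refine (hasFDerivAt_sign_mul_clm_rpow_one_div hr0 hw _ ?_).congr_fderiv ?_
  · exact thurstonForm_criticalOrbit hr0 (hn ▸ hper) j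
  · ext z
    exact (thurstonJacobian_mulVec_apply a₀ r z j).symm

/-- The Thurston map is (Fréchet) differentiable at `ω = (w_1(a₀), …, w_{n-1}(a₀))`, and its
Jacobian matrix there is the matrix described above. -/
theorem thurston_hasFDerivAt (r a₀ : ℝ) (hr : 1 < r) (n : ℕ) (hn : 3 ≤ n)
    (horbit : ∀ j, 1 ≤ j → j ≤ n - 1 → criticalOrbit a₀ r j ≠ 0)
    (hper : criticalOrbit a₀ r n = 0) :
    HasFDerivAt (thurstonMap r (n - 1) (fun j => Real.sign (criticalOrbit a₀ r j)))
      (LinearMap.toContinuousLinearMap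
        (Matrix.mulVecLin (thurstonJacobian a₀ r (n - 1))))
      (fun i : Fin (n - 1) => criticalOrbit a₀ r ((i : ℕ) + 1)) :=
  thurston_hasFDerivAt_general r a₀ hr n horbit hper
end

section
/- Let m ≥ 1 and let d₁, …, d_m be nonzero real numbers. Define the m × m real matrix M by: for 1 ≤ j ≤ m−1, the (j,1) entry of M is −1/d_j and the (j, j+1) entry is 1/d_j; the (m,1) entry is −1/d_m; and all other entries are 0. Then det(I_m − M) = Σ_{k=0}^{m} Π_{j=1}^{k} (1/d_j), where the empty product (k = 0) equals 1. -/
/-!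
Write `a j = 1 / d j`. Then `I - M = (I - N) + c e₁ᵀ`, where `N` is the superdiagonal matrix with
entries `N j (j+1) = a j` and `c j = a j`. The unitriangular `I - N` has determinant `1`,
and back substitution solves `(I - N) x = c` by the Horner tails
`x j = a j (1 + a (j+1) (1 + ⋯ (1 + a m)))`. The matrix determinant lemma then gives
`det (I - M) = 1 + x 1 = Σ_{k ≤ m} Π_{j ≤ k} a j`.
-/

/-- The Thurston-type matrix built from nonzero numbers `d_1, …, d_m` (here `d j` for
`j : ℕ`, `1 ≤ j ≤ m`, with 0-based row `j : Fin m` corresponding to the mathematical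
index `j+1`): in 1-based indexing, for `1 ≤ j ≤ m-1` the `(j,1)` entry is `-1/d_j` and
the `(j,j+1)` entry is `1/d_j`; the `(m,1)` entry is `-1/d_m`; all other entries are 0. -/
noncomputable def thurstonTypeMatrix (m : ℕ) (d : ℕ → ℝ) : Matrix (Fin m) (Fin m) ℝ :=
  fun j i =>
    if (j : ℕ) + 1 < m then
      if (i : ℕ) = 0 then -1 / d ((j : ℕ) + 1)
      else if (i : ℕ) = (j : ℕ) + 1 then 1 / d ((j : ℕ) + 1)
      else 0
    else
      if (i : ℕ) = 0 then -1 / d m else 0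

open Finset Matrix

theorem Matrix.det_add_vecMulVec_mulVec {n R : Type*} [Fintype n] [DecidableEq n] [CommRing R]
    (B : Matrix n n R) (x v : n → R) :
    (B + vecMulVec (B *ᵥ x) v).det = B.det * (1 + v ⬝ᵥ x) := by
  nth_rewrite 1 [← Matrix.mul_one B]
  rw [vecMulVec_eq Unit, replicateCol_mulVec, Matrix.mul_assoc, ← Matrix.mul_add, det_mul,
    det_one_add_replicateCol_mul_replicateRow]

theorem Fin.sum_ite_val_eq {R : Type*} [AddCommMonoid R] (m k : ℕ) (g : ℕ → R) :
    ∑ i : Fin m, (if (i : ℕ) = k then g i else 0) = if k < m then g k else 0 := by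
  rw [Fin.sum_univ_eq_sum_range (fun i => if i = k then g i else 0), sum_ite_eq']
  simp only [mem_range]

section tailSum

variable {R : Type*} [CommSemiring R] (a : ℕ → R) (m : ℕ)

def tailSum (i : ℕ) : R := ∑ k ∈ Icc i m, ∏ j ∈ Icc i k, a j

theorem tailSum_of_lt {i : ℕ} (h : m < i) : tailSum a m i = 0 := by
  rw [tailSum, Icc_eq_empty_of_lt h, sum_empty]

theorem tailSum_eq_mul {i : ℕ} (h : i ≤ m) :
    tailSum a m i = a i * (1 + tailSum a m (i + 1)) := by
  have hprod : ∀ k ∈ Icc (i + 1) m, ∏ j ∈ Icc i k, a j = a i * ∏ j ∈ Icc (i + 1) k, a j := by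
    intro k hk
    rw [← insert_Icc_add_one_left_eq_Icc (by grind), prod_insert (by simp)]
  rw [tailSum, tailSum, ← insert_Icc_add_one_left_eq_Icc h, sum_insert (by simp),
    sum_congr rfl hprod, ← mul_sum, Icc_self, prod_singleton, mul_add, mul_one]

theorem sum_range_prod_Icc_eq_one_add_tailSum :
    ∑ k ∈ range (m + 1), ∏ j ∈ Icc 1 k, a j = 1 + tailSum a m 1 := by
  rw [range_eq_Ico, sum_eq_sum_Ico_succ_bot m.succ_pos, Nat.succ_eq_add_one,
    Ico_add_one_right_eq_Icc, Icc_eq_empty_of_lt one_pos, prod_empty, tailSum]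

end tailSum

section superdiag

variable {R : Type*} [CommRing R] (m : ℕ) (a : ℕ → R)

/-- In 1-based indexing, the `(j, j+1)` entry is `a j`. -/
def superdiagMatrix : Matrix (Fin m) (Fin m) R :=
  fun j i => if (i : ℕ) = j + 1 then a (j + 1) else 0

theorem det_one_sub_superdiagMatrix : (1 - superdiagMatrix m a).det = 1 := by
  rw [det_of_isUpperTriangular]
  · refine prod_eq_one fun j _ => ?_
    simp [superdiagMatrix]
  · intro j i (hij : i < j)
    have hi : (i : ℕ) ≠ j + 1 := by omega
    rw [Matrix.sub_apply, one_apply_ne hij.ne', superdiagMatrix, if_neg hi, sub_zero]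

theorem one_sub_superdiagMatrix_mulVec_tailSum :
    (1 - superdiagMatrix m a) *ᵥ (fun i : Fin m => tailSum a m (i + 1)) =
      fun j : Fin m => a (j + 1) := by
  ext j
  have hN : (superdiagMatrix m a *ᵥ fun i : Fin m => tailSum a m (i + 1)) j =
      a (j + 1) * tailSum a m (j + 2) := by
    simp only [mulVec, dotProduct, superdiagMatrix, ite_mul, zero_mul]
    rw [Fin.sum_ite_val_eq (g := fun i => a (j + 1) * tailSum a m (i + 1))]
    split_ifs with h
    · rfl
    · rw [tailSum_of_lt _ _ (by omega), mul_zero]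
  rw [sub_mulVec, one_mulVec, Pi.sub_apply, hN, tailSum_eq_mul a m (by omega)]
  ring

end superdiag

theorem thurstonTypeMatrix_eq (m : ℕ) (d : ℕ → ℝ) :
    thurstonTypeMatrix m d = superdiagMatrix m (fun j => 1 / d j) -
      vecMulVec (fun j : Fin m => 1 / d (j + 1))
        (fun i : Fin m => if (i : ℕ) = 0 then 1 else 0) := by
  ext j i
  obtain hj | hj := (show (j : ℕ) + 1 ≤ m from j.isLt).lt_or_eq
  · simp only [thurstonTypeMatrix, superdiagMatrix, Matrix.sub_apply, vecMulVec_apply, if_pos hj]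
    split_ifs <;> first | omega | ring
  · have hd : d m = d (j + 1) := by rw [hj]
    simp only [thurstonTypeMatrix, superdiagMatrix, Matrix.sub_apply, vecMulVec_apply,
      if_neg hj.not_lt, hd]
    split_ifs <;> first | omega | ring

theorem det_one_sub_thurstonTypeMatrix_general (m : ℕ) (d : ℕ → ℝ) :
    Matrix.det ((1 : Matrix (Fin m) (Fin m) ℝ) - thurstonTypeMatrix m d) =
      ∑ k ∈ Finset.range (m + 1), ∏ j ∈ Finset.Icc 1 k, (1 / d j) := by
  set a : ℕ → ℝ := fun j => 1 / d j
  set x : Fin m → ℝ := fun i => tailSum a m (i + 1)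
  set e₀ : Fin m → ℝ := fun i => if (i : ℕ) = 0 then 1 else 0
  have he₀x : e₀ ⬝ᵥ x = tailSum a m 1 := by
    simp only [e₀, dotProduct, ite_mul, one_mul, zero_mul]
    rw [Fin.sum_ite_val_eq (g := fun i => tailSum a m (i + 1))]
    split_ifs with hm
    · rfl
    · rw [tailSum_of_lt _ _ (by omega)]
  calc det (1 - thurstonTypeMatrix m d)
      = det (1 - superdiagMatrix m a + vecMulVec ((1 - superdiagMatrix m a) *ᵥ x) e₀) := by
        rw [one_sub_superdiagMatrix_mulVec_tailSum, thurstonTypeMatrix_eq, ← sub_add]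
    _ = 1 + tailSum a m 1 := by
        rw [det_add_vecMulVec_mulVec, det_one_sub_superdiagMatrix, one_mul, he₀x]
    _ = ∑ k ∈ range (m + 1), ∏ j ∈ Icc 1 k, a j :=
        (sum_range_prod_Icc_eq_one_add_tailSum a m).symm

/-- For `m ≥ 1` and nonzero `d_1, …, d_m`, the matrix `M` above satisfies
`det(I_m - M) = Σ_{k=0}^{m} Π_{j=1}^{k} (1/d_j)` (the `k = 0` term being the empty
product `1`). -/
theorem det_one_sub_thurstonTypeMatrix (m : ℕ) (hm : 1 ≤ m) (d : ℕ → ℝ)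
    (hd : ∀ j, 1 ≤ j → j ≤ m → d j ≠ 0) :
    Matrix.det ((1 : Matrix (Fin m) (Fin m) ℝ) - thurstonTypeMatrix m d) =
      ∑ k ∈ Finset.range (m + 1), ∏ j ∈ Finset.Icc 1 k, (1 / d j) :=
  det_one_sub_thurstonTypeMatrix_general m d
end

section
/- Fix r > 1, a parameter a₀ ∈ ℝ, and an integer n ≥ 2 such that w_j(a₀) = f_{a₀}^j(0) ≠ 0 for 1 ≤ j ≤ n−1. Let M be the (n−1) × (n−1) real matrix with entries: for 1 ≤ j ≤ n−2, the (j,1) entry is −1/f_{a₀}'(w_j(a₀)) and the (j, j+1) entry is 1/f_{a₀}'(w_j(a₀)); the (n−1,1) entry is −1/f_{a₀}'(w_{n−1}(a₀)); all other entries are 0. Then det(I_{n−1} − M) · (f_{a₀}^{n−1})'(f_{a₀}(0)) equals the derivative at a₀ of the function a ↦ f_a^n(0), where (f_{a₀}^{n−1})'(f_{a₀}(0)) = Π_{j=1}^{n−1} f_{a₀}'(w_j(a₀)). -/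
/-! Write `d_k = f_{a₀}'(w_k)` and `J_m` for the Jacobian of size `m`. Both sides satisfy
`x_{m+1} = 1 + d_{m+1} x_m`, `x_0 = 1`: the derivative of `a ↦ f_a^{m+1}(0)` by the chain rule
(`|x|^r` is differentiable everywhere since `r > 1`), and `det (1 - J_m) * ∏_{k ≤ m} d_k` because
Laplace expansion along the last row gives
`det (1 - J_{m+1}) = det (1 - J_m) + ∏_{k ≤ m+1} 1 / d_k`. -/

open Finset Matrix

theorem powerLawDeriv_eq_neg_mul_abs_rpow (r x : ℝ) :
    powerLawDeriv r x = -(r * |x| ^ (r - 2) * x) := by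
  rcases lt_trichotomy x 0 with hx | rfl | hx
  · rw [powerLawDeriv, Real.sign_of_neg hx, show r - 1 = r - 2 + 1 by ring,
      Real.rpow_add_one (abs_ne_zero.mpr hx.ne), abs_of_neg hx]
    ring
  · simp [powerLawDeriv]
  · rw [powerLawDeriv, Real.sign_of_pos hx, abs_of_pos hx, show r - 1 = r - 2 + 1 by ring,
      Real.rpow_add_one hx.ne']
    ring

theorem powerLawDeriv_ne_zero {r x : ℝ} (hr : r ≠ 0) (hx : x ≠ 0) : powerLawDeriv r x ≠ 0 := by
  rw [powerLawDeriv_eq_neg_mul_abs_rpow]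
  exact neg_ne_zero.mpr (mul_ne_zero (mul_ne_zero hr (by positivity)) hx)

theorem HasDerivAt.powerLawMap {x : ℝ → ℝ} {D a₀ r : ℝ} (hr : 1 < r) (hx : HasDerivAt x D a₀) :
    HasDerivAt (fun a => powerLawMap a r (x a)) (1 + powerLawDeriv r (x a₀) * D) a₀ := by
  refine ((hasDerivAt_id a₀).sub ((hasDerivAt_abs_rpow (x a₀) hr).comp a₀ hx)).congr_deriv ?_
  rw [powerLawDeriv_eq_neg_mul_abs_rpow]
  ring

section
variable (a₀ r : ℝ)

theorem thurstonJacobian_submatrix_castSucc (m : ℕ) :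
    (thurstonJacobian a₀ r (m + 1)).submatrix Fin.castSucc Fin.castSucc =
      thurstonJacobian a₀ r m := by
  ext j i
  have := j.isLt
  simp only [thurstonJacobian, submatrix_apply, Fin.val_castSucc]
  split_ifs <;> first | rfl | omega | rw [show (j : ℕ) + 1 = m by omega]

theorem det_one_sub_thurstonJacobian_submatrix_castSucc_succ (m : ℕ) :
    det ((1 - thurstonJacobian a₀ r (m + 1)).submatrix Fin.castSucc Fin.succ) =
      (-1) ^ m * ∏ k ∈ Icc 1 m, 1 / powerLawDeriv r (criticalOrbit a₀ r k) := by
  rw [det_of_isLowerTriangular]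
  · have hdiag (i : Fin m) :
        (1 - thurstonJacobian a₀ r (m + 1)).submatrix Fin.castSucc Fin.succ i i =
          -(1 / powerLawDeriv r (criticalOrbit a₀ r (i + 1))) := by
      simp [thurstonJacobian, one_apply, Fin.ext_iff]
    rw [prod_congr rfl fun i _ => hdiag i, prod_neg, card_univ, Fintype.card_fin,
      Fin.prod_univ_eq_prod_range (fun i => 1 / powerLawDeriv r (criticalOrbit a₀ r (i + 1))),
      range_eq_Ico, prod_Ico_add' (fun k => 1 / powerLawDeriv r (criticalOrbit a₀ r k))]
    rfl
  · intro j i hji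
    have hne : (j : ℕ) ≠ i + 1 ∧ (i : ℕ) ≠ j := by
      have : (j : ℕ) < i := hji
      omega
    simp [thurstonJacobian, one_apply, Fin.ext_iff, hne]

theorem det_one_sub_thurstonJacobian_succ (m : ℕ) :
    det (1 - thurstonJacobian a₀ r (m + 1)) =
      det (1 - thurstonJacobian a₀ r m) +
        ∏ k ∈ Icc 1 (m + 1), 1 / powerLawDeriv r (criticalOrbit a₀ r k) := by
  cases m with
  | zero => simp [thurstonJacobian, neg_div]
  | succ m =>
    rw [det_succ_row _ (Fin.last (m + 1)), Fin.sum_univ_succ, Fin.sum_univ_castSucc]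
    simp only [Fin.succAbove_last, Fin.succAbove_zero, Fin.succ_last]
    have hminor : (1 - thurstonJacobian a₀ r (m + 1 + 1)).submatrix Fin.castSucc Fin.castSucc =
        1 - thurstonJacobian a₀ r (m + 1) := by
      rw [submatrix_sub, Pi.sub_apply, Pi.sub_apply, submatrix_one _ (Fin.castSucc_injective _),
        thurstonJacobian_submatrix_castSucc]
    rw [hminor, det_one_sub_thurstonJacobian_submatrix_castSucc_succ]
    have hcorner : (1 - thurstonJacobian a₀ r (m + 1 + 1)) (Fin.last (m + 1)) 0 =
        1 / powerLawDeriv r (criticalOrbit a₀ r (m + 1 + 1)) := by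
      simp [thurstonJacobian, one_apply, Fin.ext_iff, neg_div]
    have hrow (j : Fin m) :
        (1 - thurstonJacobian a₀ r (m + 1 + 1)) (Fin.last (m + 1)) j.castSucc.succ = 0 := by
      simp [thurstonJacobian, one_apply, Fin.ext_iff, j.isLt.ne']
    have hdiag :
        (1 - thurstonJacobian a₀ r (m + 1 + 1)) (Fin.last (m + 1)) (Fin.last (m + 1)) = 1 := by
      simp [thurstonJacobian]
    have hsign : ((-1 : ℝ) ^ (m + 1)) * (-1) ^ (m + 1) = 1 := by
      rw [← mul_pow]; norm_num
    rw [hcorner, sum_eq_zero fun j _ => by rw [hrow, mul_zero, zero_mul], hdiag,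
      prod_Icc_succ_top (show 1 ≤ m + 1 + 1 by omega), Fin.val_last, Fin.val_zero, add_zero,
      pow_add (-1 : ℝ) (m + 1) (m + 1), hsign]
    linear_combination (1 / powerLawDeriv r (criticalOrbit a₀ r (m + 1 + 1)) *
      ∏ k ∈ Icc 1 (m + 1), 1 / powerLawDeriv r (criticalOrbit a₀ r k)) * hsign

theorem hasDerivAt_iterate_powerLawMap_succ (hr : 1 < r) (m : ℕ)
    (horbit : ∀ j, 1 ≤ j → j ≤ m → criticalOrbit a₀ r j ≠ 0) :
    HasDerivAt (fun a => (powerLawMap a r)^[m + 1] 0)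
      (det (1 - thurstonJacobian a₀ r m) *
        ∏ j ∈ Icc 1 m, powerLawDeriv r (criticalOrbit a₀ r j)) a₀ := by
  induction m with
  | zero => simpa using (hasDerivAt_const a₀ (0 : ℝ)).powerLawMap hr
  | succ m ih =>
    have hstep := (ih fun j h1 h2 => horbit j h1 (by omega)).powerLawMap hr
    simp only [← Function.iterate_succ_apply' (powerLawMap _ r)] at hstep
    refine hstep.congr_deriv ?_
    have hinv : ∏ j ∈ Icc 1 (m + 1), 1 / powerLawDeriv r (criticalOrbit a₀ r j) *
        powerLawDeriv r (criticalOrbit a₀ r j) = 1 := by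
      refine prod_eq_one fun j hj => one_div_mul_cancel ?_
      rw [mem_Icc] at hj
      exact powerLawDeriv_ne_zero (by positivity) (horbit j hj.1 hj.2)
    rw [det_one_sub_thurstonJacobian_succ, add_mul, ← prod_mul_distrib, hinv,
      prod_Icc_succ_top (show 1 ≤ m + 1 by omega)]
    unfold criticalOrbit
    ring

end

/-- The determinant identity: `det(I_{n-1} - M) · (f_{a₀}^{n-1})'(f_{a₀}(0))` equals the
derivative at `a₀` of `a ↦ f_a^n(0)`, where
`(f_{a₀}^{n-1})'(f_{a₀}(0)) = Π_{j=1}^{n-1} f_{a₀}'(w_j(a₀))`. -/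
theorem det_identity_parameter_derivative (r a₀ : ℝ) (hr : 1 < r) (n : ℕ) (hn : 2 ≤ n)
    (horbit : ∀ j, 1 ≤ j → j ≤ n - 1 → criticalOrbit a₀ r j ≠ 0) :
    HasDerivAt (fun a => (powerLawMap a r)^[n] 0)
      (Matrix.det ((1 : Matrix (Fin (n - 1)) (Fin (n - 1)) ℝ) - thurstonJacobian a₀ r (n - 1)) *
        ∏ j ∈ Finset.Icc 1 (n - 1), powerLawDeriv r (criticalOrbit a₀ r j)) a₀ := by
  obtain ⟨m, rfl⟩ : ∃ m, n = m + 1 := ⟨n - 1, by omega⟩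
  exact hasDerivAt_iterate_powerLawMap_succ a₀ r hr m horbit
end
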